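/- Every finitely generated subgroup of the commutator subgroup [A(Γ), A(Γ)] of a right-angled Artin group on a finite graph Γ embeds into [GP_m(Γ), GP_m(Γ)] for some finite m ≥ 2. -/

import Mathlib

open Monoid
open scoped commutatorElement

variable {V : Type*} (Γ : SimpleGraph V) (G : V → Type*) [∀ v, Group (G v)]

/-- The defining relators of the graph product: commutators of elements of
vertex groups attached to adjacent vertices. -/
def graphProductRels : Set (Monoid.CoprodI G) :=
  {x | ∃ (u v : V) (g : G u) (h : G v), Γ.Adj u v ∧
        x = ⁅Monoid.CoprodI.of g, Monoid.CoprodI.of h⁆}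

/-- The graph product of the groups `G v` over the graph `Γ`. -/
def GraphProduct : Type _ :=
  Monoid.CoprodI G ⧸ Subgroup.normalClosure (graphProductRels Γ G)

instance : Group (GraphProduct Γ G) :=
  QuotientGroup.Quotient.group _

/-- The canonical map from a vertex group into the graph product. -/
def GraphProduct.of (v : V) : G v →* GraphProduct Γ G :=
  (QuotientGroup.mk' _).comp Monoid.CoprodI.of

/-- The natural projection from the graph product onto the direct product of the
vertex groups. -/
def GraphProduct.proj [DecidableEq V] : GraphProduct Γ G →* ((v : V) → G v) :=
  QuotientGroup.lift _ (Monoid.CoprodI.lift fun v => MonoidHom.mulSingle G v)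
    (Subgroup.normalClosure_le_normal <| by
      rintro x ⟨u, v, g, h, hadj, rfl⟩
      have huv : u ≠ v := hadj.ne
      simp only [SetLike.mem_coe, MonoidHom.mem_ker, map_commutatorElement,
        Monoid.CoprodI.lift_of]
      exact commutatorElement_eq_one_iff_commute.mpr
        (Pi.mulSingle_commute huv g h))

/-- The graph product kernel: the kernel of the natural surjection onto the
direct product of the vertex groups. -/
def GraphProductKernel [DecidableEq V] : Subgroup (GraphProduct Γ G) :=
  MonoidHom.ker (GraphProduct.proj Γ G)

/-!
Reduction mod `m` sends `A(Γ)` to `GP_m(Γ)` and commutator subgroups into commutator subgroups;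
it is injective on `H` as soon as `m > 2L`, where `L` bounds the `ℓ¹`-length of words for the
generators of `H` and their inverses. Since these words have exponent sum zero at every vertex, the
lattice path in `ℤ^V` traced by a product of them stays in the cube `[-L, L]^V`. Reducing a word
(deleting trivial letters, merging two letters at the same vertex separated only by letters at
neighbours of it) only merges consecutive steps of that path along one coordinate, so the path of
the reduced word stays in the cube too, and each of its letters has absolute value at most
`2L < m`. Its image mod `m` is therefore still reduced, and a nonempty reduced word is nontrivial
in any graph product: this is the normal form theorem, proved through the action of the graph
product on reduced words up to shuffling commuting letters.
-/

theorem map_mem_commutator {G G' : Type*} [Group G] [Group G'] (f : G →* G') {x : G}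
    (hx : x ∈ commutator G) : f x ∈ commutator G' :=
  (map_commutator_eq G f).trans_le (Subgroup.commutator_mono le_top le_top) ⟨x, hx, rfl⟩

theorem List.partialSums_subset_append {α : Type*} [AddMonoid α] (l t : List α) :
    l.partialSums ⊆ (l ++ t).partialSums := by
  rw [partialSums_append]
  exact subset_append_left _ _

theorem List.sum_mem_partialSums {α : Type*} [AddMonoid α] (l : List α) :
    l.sum ∈ l.partialSums := by
  induction l with
  | nil => simp
  | cons a l ih => simpa [partialSums_cons] using Or.inr ⟨_, ih, rfl⟩

theorem List.partialSums_append_add_cons_subset {α : Type*} [AddMonoid α] (p t : List α)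
    (a b : α) : (p ++ (a + b) :: t).partialSums ⊆ (p ++ a :: b :: t).partialSums := by
  intro x hx
  simp [partialSums_append, partialSums_cons, add_assoc] at hx ⊢
  tauto

theorem List.partialSums_append_subset_append_zero_cons {α : Type*} [AddMonoid α]
    (p t : List α) : (p ++ t).partialSums ⊆ (p ++ 0 :: t).partialSums := by
  intro x hx
  simp only [partialSums_append, partialSums_cons, tail_cons, map_map, Function.comp_def,
    zero_add, mem_append] at hx ⊢
  exact hx.imp_right fun h => map_subset _ (tail_subset _) h

namespace GraphProduct

section Lift

variable {Γ G}

theorem of_commute {u v : V} (huv : Γ.Adj u v) (g : G u) (h : G v) :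
    Commute (of Γ G u g) (of Γ G v h) := by
  have := (QuotientGroup.eq_one_iff _).mpr
    (Subgroup.subset_normalClosure (s := graphProductRels Γ G) ⟨u, v, g, h, huv, rfl⟩)
  rwa [← QuotientGroup.mk'_apply, map_commutatorElement,
    commutatorElement_eq_one_iff_commute] at this

variable {M : Type*} [Monoid M]

def lift (f : ∀ v, G v →* M) (hf : ∀ u v, Γ.Adj u v → ∀ g h, Commute (f u g) (f v h)) :
    GraphProduct Γ G →* M :=
  QuotientGroup.lift _ (CoprodI.lift f) <| Subgroup.normalClosure_le_normal <| by
    rintro _ ⟨u, v, g, h, huv, rfl⟩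
    rw [SetLike.mem_coe, ← MonoidHom.ker_toHomUnits, MonoidHom.mem_ker, map_commutatorElement,
      commutatorElement_eq_one_iff_commute]
    exact Units.ext (by simpa using (hf u v huv g h).eq)

def map {G' : V → Type*} [∀ v, Group (G' v)] (f : ∀ v, G v →* G' v) :
    GraphProduct Γ G →* GraphProduct Γ G' :=
  lift (fun v => (of Γ G' v).comp (f v)) fun _ _ huv _ _ => of_commute huv _ _

@[simp]
theorem map_of {G' : V → Type*} [∀ v, Group (G' v)] (f : ∀ v, G v →* G' v) (v : V)
    (g : G v) : map f (of Γ G v g) = of Γ G' v (f v g) :=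
  rfl

end Lift

section Words

variable {Γ} {K : Type*} [Group K]

variable (Γ) in
def wordProd (w : List (V × K)) : GraphProduct Γ (fun _ => K) :=
  (w.map fun l => of Γ _ l.1 l.2).prod

@[simp]
theorem wordProd_nil : wordProd Γ ([] : List (V × K)) = 1 := rfl

@[simp]
theorem wordProd_cons (l : V × K) (w : List (V × K)) :
    wordProd Γ (l :: w) = of Γ _ l.1 l.2 * wordProd Γ w :=
  List.prod_cons

@[simp]
theorem wordProd_append (w₁ w₂ : List (V × K)) :
    wordProd Γ (w₁ ++ w₂) = wordProd Γ w₁ * wordProd Γ w₂ := by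
  simp [wordProd]

theorem wordProd_surjective : Function.Surjective (wordProd Γ (K := K)) := by
  rintro ⟨x⟩
  induction x using CoprodI.induction_on with
  | one => exact ⟨[], rfl⟩
  | of v g => exact ⟨[(v, g)], mul_one _⟩
  | mul x y hx hy =>
    obtain ⟨wx, hwx⟩ := hx
    obtain ⟨wy, hwy⟩ := hy
    exact ⟨wx ++ wy, by rw [wordProd_append, hwx, hwy]; rfl⟩

theorem map_wordProd {K' : Type*} [Group K'] (f : K →* K') (w : List (V × K)) :
    map (fun _ => f) (wordProd Γ w) = wordProd Γ (w.map (Prod.map id f)) := by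
  induction w with
  | nil => simp
  | cons l w ih => simp [ih]

end Words

section Shuffle

variable {Γ} {K : Type*}

variable (Γ) in
inductive Shuffle : List (V × K) → List (V × K) → Prop
  | swap (p q : List (V × K)) {a b : V × K} :
      Γ.Adj a.1 b.1 → Shuffle (p ++ a :: b :: q) (p ++ b :: a :: q)

variable (Γ) in
abbrev ShuffleEquiv : List (V × K) → List (V × K) → Prop :=
  Relation.ReflTransGen (Shuffle Γ)

instance : Std.Symm (Shuffle Γ (K := K)) where
  symm _ _ := fun ⟨p, q, hab⟩ => .swap p q hab.symm

theorem ShuffleEquiv.symm {w w' : List (V × K)} (h : ShuffleEquiv Γ w w') :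
    ShuffleEquiv Γ w' w :=
  Relation.ReflTransGen.stdSymm.symm _ _ h

theorem Shuffle.cons {w w' : List (V × K)} (l : V × K) (h : Shuffle Γ w w') :
    Shuffle Γ (l :: w) (l :: w') := by
  obtain ⟨p, q, hab⟩ := h
  exact .swap (l :: p) q hab

theorem ShuffleEquiv.cons {w w' : List (V × K)} (l : V × K) (h : ShuffleEquiv Γ w w') :
    ShuffleEquiv Γ (l :: w) (l :: w') :=
  Relation.ReflTransGen.lift (List.cons l) (fun _ _ => Shuffle.cons l) _ _ h

theorem ShuffleEquiv.length_eq {w w' : List (V × K)} (h : ShuffleEquiv Γ w w') :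
    w.length = w'.length := by
  induction h with
  | refl => rfl
  | tail _ hs ih => obtain ⟨p, q, _⟩ := hs; simpa using ih

theorem shuffleEquiv_swap {a b : V × K} (hab : Γ.Adj a.1 b.1) (t : List (V × K)) :
    ShuffleEquiv Γ (a :: b :: t) (b :: a :: t) :=
  .single (.swap [] t hab)

end Shuffle

section Pull

variable {Γ} {K : Type*} [DecidableEq V] [DecidableRel Γ.Adj]

variable (Γ) in
/-- The first letter at `v` that can be moved to the front of `w` past letters at neighbours
of `v`, together with what remains of `w`. -/
def pull (v : V) : List (V × K) → Option (K × List (V × K))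
  | [] => none
  | (u, g) :: t =>
    if u = v then some (g, t)
    else if Γ.Adj u v then (pull v t).map fun p => (p.1, (u, g) :: p.2) else none

@[simp]
theorem pull_nil (v : V) : pull Γ v ([] : List (V × K)) = none := rfl

@[simp]
theorem pull_cons_self (v : V) (g : K) (t : List (V × K)) :
    pull Γ v ((v, g) :: t) = some (g, t) := by
  simp [pull]

theorem pull_cons_of_adj {u v : V} (huv : Γ.Adj u v) (g : K) (t : List (V × K)) :
    pull Γ v ((u, g) :: t) = (pull Γ v t).map fun p => (p.1, (u, g) :: p.2) := by
  simp [pull, huv.ne, huv]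

theorem pull_cons_of_not_adj {u v : V} (hne : u ≠ v) (huv : ¬Γ.Adj u v) (g : K)
    (t : List (V × K)) : pull Γ v ((u, g) :: t) = none := by
  simp [pull, hne, huv]

theorem shuffleEquiv_of_pull_eq_some {v : V} {k : K} {w t : List (V × K)}
    (h : pull Γ v w = some (k, t)) : ShuffleEquiv Γ w ((v, k) :: t) := by
  induction w generalizing t with
  | nil => simp at h
  | cons l w ih =>
    obtain ⟨u, g⟩ := l
    by_cases huv : u = v
    · subst huv
      obtain ⟨rfl, rfl⟩ : g = k ∧ w = t := by simpa using h
      exact .refl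
    by_cases hadj : Γ.Adj u v
    · obtain ⟨⟨k, t'⟩, ht', h⟩ :=
        Option.map_eq_some_iff.mp (pull_cons_of_adj hadj g w ▸ h)
      cases h
      exact ((ih ht').cons _).trans (shuffleEquiv_swap hadj t')
    · simp [pull_cons_of_not_adj huv hadj] at h

theorem Shuffle.pull_congr {w w' : List (V × K)} (h : Shuffle Γ w w') (v : V) :
    (pull Γ v w = none → pull Γ v w' = none) ∧
      ∀ k t, pull Γ v w = some (k, t) →
        ∃ t', pull Γ v w' = some (k, t') ∧ ShuffleEquiv Γ t t' := by
  obtain @⟨p, q, ⟨a, x⟩, ⟨b, y⟩, hab⟩ := h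
  induction p with
  | nil =>
    dsimp only at hab
    simp only [List.nil_append]
    by_cases hav : a = v
    · subst hav
      simp [pull_cons_of_adj hab.symm, Relation.ReflTransGen.refl]
    by_cases hbv : b = v
    · subst hbv
      simp [pull_cons_of_adj hab, Relation.ReflTransGen.refl]
    by_cases hadj : Γ.Adj a v ∧ Γ.Adj b v
    · simp only [pull_cons_of_adj hadj.1, pull_cons_of_adj hadj.2, Option.map_map]
      rcases pull Γ v q with _ | ⟨k, t⟩
      · simp
      · simpa using shuffleEquiv_swap hab t
    · rcases not_and_or.mp hadj with hadj | hadj <;>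
        by_cases hadj' : Γ.Adj a v <;> by_cases hadj'' : Γ.Adj b v <;>
        simp_all [pull_cons_of_not_adj, pull_cons_of_adj]
  | cons c p ih =>
    obtain ⟨u, g⟩ := c
    by_cases huv : u = v
    · subst huv
      simpa using .single (.swap p q hab)
    by_cases hadj : Γ.Adj u v
    · simp only [List.cons_append, pull_cons_of_adj hadj, Option.map_eq_none_iff,
        Option.map_eq_some_iff, Prod.exists, Prod.mk.injEq]
      refine ⟨ih.1, ?_⟩
      rintro k _ ⟨k, t, ht, rfl, rfl⟩
      obtain ⟨t', ht', hsh⟩ := ih.2 k t ht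
      exact ⟨_, ⟨k, t', ht', rfl, rfl⟩, hsh.cons _⟩
    · simp [pull_cons_of_not_adj huv hadj]

theorem ShuffleEquiv.pull_eq_none {w w' : List (V × K)} (h : ShuffleEquiv Γ w w') {v : V}
    (hw : pull Γ v w = none) : pull Γ v w' = none := by
  induction h with
  | refl => exact hw
  | tail _ hs ih => exact (hs.pull_congr v).1 ih

theorem ShuffleEquiv.pull_eq_some {w w' : List (V × K)} (h : ShuffleEquiv Γ w w') {v : V}
    {k : K} {t : List (V × K)} (hw : pull Γ v w = some (k, t)) :
    ∃ t', pull Γ v w' = some (k, t') ∧ ShuffleEquiv Γ t t' := by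
  induction h with
  | refl => exact ⟨t, hw, .refl⟩
  | tail _ hs ih =>
    obtain ⟨t₁, h₁, e₁⟩ := ih
    obtain ⟨t₂, h₂, e₂⟩ := (hs.pull_congr v).2 _ _ h₁
    exact ⟨t₂, h₂, e₁.trans e₂⟩

theorem pull_eq_none_of_pull_eq_some {u v : V} (huv : Γ.Adj u v) {w t : List (V × K)} {k : K}
    (hu : pull Γ u w = some (k, t)) (hv : pull Γ v w = none) : pull Γ v t = none := by
  have := (shuffleEquiv_of_pull_eq_some hu).pull_eq_none hv
  simpa [pull_cons_of_adj huv] using this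

theorem pull_pull_of_adj {u v : V} (huv : Γ.Adj u v) {w tu tv : List (V × K)} {k l : K}
    (hu : pull Γ u w = some (k, tu)) (hv : pull Γ v w = some (l, tv)) :
    ∃ s s', pull Γ v tu = some (l, s) ∧ pull Γ u tv = some (k, s') ∧
      ShuffleEquiv Γ s s' := by
  obtain ⟨t, ht, htv⟩ := (shuffleEquiv_of_pull_eq_some hu).pull_eq_some hv
  obtain ⟨⟨_, s⟩, hs, h⟩ := Option.map_eq_some_iff.mp (pull_cons_of_adj huv k tu ▸ ht)
  cases h
  obtain ⟨s', hs', hss'⟩ := htv.symm.pull_eq_some (pull_cons_self u k s)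
  exact ⟨s, s', hs, hs', hss'⟩

theorem pull_map {K' : Type*} (f : K → K') (v : V) (w : List (V × K)) :
    pull Γ v (w.map (Prod.map id f)) =
      (pull Γ v w).map (Prod.map f (List.map (Prod.map id f))) := by
  induction w with
  | nil => rfl
  | cons l w ih =>
    obtain ⟨u, g⟩ := l
    by_cases huv : u = v
    · subst huv
      simp
    by_cases hadj : Γ.Adj u v
    · simp only [List.map_cons, Prod.map_apply, id_eq, pull_cons_of_adj hadj, ih,
        Option.map_map]
      rfl
    · simp [pull_cons_of_not_adj huv hadj]

end Pull

section Reduced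

variable {Γ} {K : Type*} [One K] [DecidableEq V] [DecidableRel Γ.Adj]

variable (Γ) in
inductive IsReduced : List (V × K) → Prop
  | nil : IsReduced []
  | cons {v : V} {g : K} {t : List (V × K)} :
      g ≠ 1 → pull Γ v t = none → IsReduced t → IsReduced ((v, g) :: t)

theorem Shuffle.isReduced {w w' : List (V × K)} (h : Shuffle Γ w w') (hw : IsReduced Γ w) :
    IsReduced Γ w' := by
  obtain @⟨p, q, ⟨a, x⟩, ⟨b, y⟩, hab⟩ := h
  induction p with
  | nil =>
    obtain _ | ⟨hx, hpa, _ | ⟨hy, hpb, hq⟩⟩ := hw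
    rw [pull_cons_of_adj hab.symm, Option.map_eq_none_iff] at hpa
    exact .cons hy (by simp [pull_cons_of_adj hab, hpb]) (.cons hx hpa hq)
  | cons c p ih =>
    obtain _ | ⟨hc, hpc, hp⟩ := hw
    exact .cons hc (((Shuffle.swap p q hab).pull_congr _).1 hpc) (ih hp)

theorem ShuffleEquiv.isReduced {w w' : List (V × K)} (h : ShuffleEquiv Γ w w')
    (hw : IsReduced Γ w) : IsReduced Γ w' := by
  induction h with
  | refl => exact hw
  | tail _ hs ih => exact hs.isReduced ih

theorem IsReduced.of_pull_eq_some {v : V} {w t : List (V × K)} {k : K} (hw : IsReduced Γ w)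
    (h : pull Γ v w = some (k, t)) : k ≠ 1 ∧ pull Γ v t = none ∧ IsReduced Γ t := by
  obtain _ | ⟨hk, hv, ht⟩ := (shuffleEquiv_of_pull_eq_some h).isReduced hw
  exact ⟨hk, hv, ht⟩

theorem IsReduced.ne_one_of_mem {w : List (V × K)} (hw : IsReduced Γ w) {l : V × K}
    (hl : l ∈ w) : l.2 ≠ 1 := by
  induction hw with
  | nil => simp at hl
  | cons hg _ _ ih => exact (List.mem_cons.mp hl).elim (· ▸ hg) ih

theorem IsReduced.map {K' : Type*} [One K'] (f : K → K') {w : List (V × K)}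
    (hw : IsReduced Γ w) (hf : ∀ l ∈ w, f l.2 ≠ 1) :
    IsReduced Γ (w.map (Prod.map id f)) := by
  induction hw with
  | nil => exact .nil
  | cons hg hv _ ih =>
    exact .cons (hf _ List.mem_cons_self) (by simp [pull_map, hv])
      (ih fun l hl => hf l (List.mem_cons_of_mem _ hl))

end Reduced

section Prepend

variable {Γ} {K : Type*} [One K] [DecidableEq K]

def prepend (v : V) (k : K) (t : List (V × K)) : List (V × K) :=
  if k = 1 then t else (v, k) :: t

theorem ShuffleEquiv.prepend {t t' : List (V × K)} (h : ShuffleEquiv Γ t t') (v : V) (k : K) :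
    ShuffleEquiv Γ (prepend v k t) (prepend v k t') := by
  unfold GraphProduct.prepend
  split_ifs
  · exact h
  · exact h.cons _

theorem prepend_prepend_of_adj {u v : V} (huv : Γ.Adj u v) (a b : K) (s : List (V × K)) :
    ShuffleEquiv Γ (prepend u a (prepend v b s)) (prepend v b (prepend u a s)) := by
  unfold prepend
  split_ifs <;> first | exact .refl | exact shuffleEquiv_swap huv s

end Prepend

section Split

variable {Γ} {K : Type*} [One K] [DecidableEq V] [DecidableRel Γ.Adj]

variable (Γ) in
def split (v : V) (w : List (V × K)) : K × List (V × K) :=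
  (pull Γ v w).getD (1, w)

theorem split_of_pull_eq_none {v : V} {w : List (V × K)} (h : pull Γ v w = none) :
    split Γ v w = (1, w) := by
  simp [split, h]

theorem split_of_pull_eq_some {v : V} {w t : List (V × K)} {k : K}
    (h : pull Γ v w = some (k, t)) : split Γ v w = (k, t) := by
  simp [split, h]

theorem IsReduced.split_snd {w : List (V × K)} (hw : IsReduced Γ w) (v : V) :
    pull Γ v (split Γ v w).2 = none ∧ IsReduced Γ (split Γ v w).2 := by
  rcases h : pull Γ v w with _ | ⟨k, t⟩
  · simpa [split_of_pull_eq_none h] using ⟨h, hw⟩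
  · simpa [split_of_pull_eq_some h] using (hw.of_pull_eq_some h).2

theorem ShuffleEquiv.split {w w' : List (V × K)} (h : ShuffleEquiv Γ w w') (v : V) :
    (split Γ v w).1 = (split Γ v w').1 ∧
      ShuffleEquiv Γ (split Γ v w).2 (split Γ v w').2 := by
  rcases hw : pull Γ v w with _ | ⟨k, t⟩
  · simpa [split_of_pull_eq_none hw, split_of_pull_eq_none (h.pull_eq_none hw)] using h
  · obtain ⟨t', hw', ht⟩ := h.pull_eq_some hw
    simpa [split_of_pull_eq_some hw, split_of_pull_eq_some hw'] using ht

theorem split_split_of_adj {u v : V} (huv : Γ.Adj u v) (w : List (V × K)) :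
    ∃ s s', split Γ v (split Γ u w).2 = ((split Γ v w).1, s) ∧
      split Γ u (split Γ v w).2 = ((split Γ u w).1, s') ∧ ShuffleEquiv Γ s s' := by
  rcases hu : pull Γ u w with _ | ⟨k, tu⟩ <;> rcases hv : pull Γ v w with _ | ⟨l, tv⟩
  · simp only [split_of_pull_eq_none hu, split_of_pull_eq_none hv]
    exact ⟨w, w, rfl, rfl, .refl⟩
  · have hu' := pull_eq_none_of_pull_eq_some huv.symm hv hu
    simp only [split_of_pull_eq_none hu, split_of_pull_eq_some hv, split_of_pull_eq_none hu']
    exact ⟨tv, tv, rfl, rfl, .refl⟩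
  · have hv' := pull_eq_none_of_pull_eq_some huv hu hv
    simp only [split_of_pull_eq_some hu, split_of_pull_eq_none hv, split_of_pull_eq_none hv']
    exact ⟨tu, tu, rfl, rfl, .refl⟩
  · obtain ⟨s, s', hs, hs', hss'⟩ := pull_pull_of_adj huv hu hv
    simp only [split_of_pull_eq_some hu, split_of_pull_eq_some hv, split_of_pull_eq_some hs,
      split_of_pull_eq_some hs']
    exact ⟨s, s', rfl, rfl, hss'⟩

variable [DecidableEq K]

theorem IsReduced.prepend_split {w : List (V × K)} (hw : IsReduced Γ w) (v : V) :
    ShuffleEquiv Γ (prepend v (split Γ v w).1 (split Γ v w).2) w := by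
  rcases h : pull Γ v w with _ | ⟨k, t⟩
  · simpa [split_of_pull_eq_none h, prepend] using .refl
  · simpa [split_of_pull_eq_some h, prepend, (hw.of_pull_eq_some h).1]
      using (shuffleEquiv_of_pull_eq_some h).symm

theorem split_prepend {v : V} {t : List (V × K)} (ht : pull Γ v t = none) (k : K) :
    split Γ v (prepend v k t) = (k, t) := by
  unfold prepend
  split_ifs with hk
  · simp [split_of_pull_eq_none ht, hk]
  · exact split_of_pull_eq_some (pull_cons_self v k t)

theorem split_prepend_of_adj {u v : V} (hvu : Γ.Adj v u) (k : K) (t : List (V × K)) :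
    split Γ u (prepend v k t) = ((split Γ u t).1, prepend v k (split Γ u t).2) := by
  unfold prepend
  split_ifs with hk
  · rfl
  · rcases h : pull Γ u t with _ | ⟨l, s⟩ <;> simp [split, pull_cons_of_adj hvu, h]

theorem isReduced_prepend {v : V} {t : List (V × K)} (ht : IsReduced Γ t)
    (hv : pull Γ v t = none) (k : K) : IsReduced Γ (prepend v k t) := by
  unfold prepend
  split_ifs with hk
  · exact ht
  · exact .cons hk hv ht

end Split

section Action

variable {Γ} {K : Type*} [Group K] [DecidableEq K] [DecidableEq V] [DecidableRel Γ.Adj]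

variable (Γ) in
/-- Left multiplication of the word `w` by the letter `(v, g)`. -/
def act (v : V) (g : K) (w : List (V × K)) : List (V × K) :=
  prepend v (g * (split Γ v w).1) (split Γ v w).2

theorem isReduced_act {w : List (V × K)} (hw : IsReduced Γ w) (v : V) (g : K) :
    IsReduced Γ (act Γ v g w) :=
  isReduced_prepend (hw.split_snd v).2 (hw.split_snd v).1 _

theorem ShuffleEquiv.act {w w' : List (V × K)} (h : ShuffleEquiv Γ w w') (v : V) (g : K) :
    ShuffleEquiv Γ (act Γ v g w) (act Γ v g w') := by
  obtain ⟨h₁, h₂⟩ := h.split v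
  simpa only [GraphProduct.act, h₁] using h₂.prepend v _

theorem IsReduced.act_one {w : List (V × K)} (hw : IsReduced Γ w) (v : V) :
    ShuffleEquiv Γ (act Γ v 1 w) w := by
  simpa [act] using hw.prepend_split v

theorem IsReduced.act_act {w : List (V × K)} (hw : IsReduced Γ w) (v : V) (g h : K) :
    act Γ v g (act Γ v h w) = act Γ v (g * h) w := by
  simp [act, split_prepend (hw.split_snd v).1, mul_assoc]

theorem act_act_of_adj {u v : V} (huv : Γ.Adj u v) (g h : K) (w : List (V × K)) :
    ShuffleEquiv Γ (act Γ u g (act Γ v h w)) (act Γ v h (act Γ u g w)) := by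
  obtain ⟨s, s', hs, hs', hss'⟩ := split_split_of_adj huv w
  simp only [act, split_prepend_of_adj huv, split_prepend_of_adj huv.symm, hs, hs']
  exact ((hss'.symm.prepend _ _).prepend _ _).trans (prepend_prepend_of_adj huv _ _ s)

variable (Γ K) in
def NormalForm : Type _ :=
  Quot fun w w' : {w : List (V × K) // IsReduced Γ w} => ShuffleEquiv Γ w.1 w'.1

def NormalForm.actHom (v : V) : K →* Function.End (NormalForm Γ K) where
  toFun g :=
    Quot.map (fun w => ⟨act Γ v g w.1, isReduced_act w.2 v g⟩) fun _ _ h => h.act v g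
  map_one' := funext <| Quot.ind fun w => Quot.sound (w.2.act_one v)
  map_mul' g h := funext <| Quot.ind fun w =>
    congrArg (Quot.mk _) (Subtype.ext (w.2.act_act v g h).symm)

variable (Γ K) in
def toEnd : GraphProduct Γ (fun _ => K) →* Function.End (NormalForm Γ K) :=
  lift NormalForm.actHom fun _ _ huv g h => funext <| Quot.ind fun w =>
    Quot.sound (act_act_of_adj huv g h w.1)

theorem toEnd_wordProd {w : List (V × K)} (hw : IsReduced Γ w) :
    toEnd Γ K (wordProd Γ w) (Quot.mk _ ⟨[], .nil⟩) = Quot.mk _ ⟨w, hw⟩ := by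
  induction hw with
  | nil => rfl
  | @cons v g t hg hv ht ih =>
    rw [wordProd_cons, map_mul]
    change toEnd Γ K (of Γ _ v g) (toEnd Γ K (wordProd Γ t) _) = _
    rw [ih]
    refine congrArg (Quot.mk _) (Subtype.ext ?_)
    simp [act, split_of_pull_eq_none hv, prepend, hg]

theorem IsReduced.eq_nil_of_wordProd_eq_one {w : List (V × K)} (hw : IsReduced Γ w)
    (h : wordProd Γ w = 1) : w = [] := by
  have := toEnd_wordProd hw
  rw [h, map_one] at this
  change Quot.mk _ _ = _ at this
  exact List.length_eq_zero_iff.mp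
    (congrArg (Quot.lift (fun w => w.1.length) fun _ _ h => h.length_eq) this).symm

end Action

section Reduction

variable {Γ} {K : Type*}

variable (Γ) in
inductive ReductionStep [One K] [Mul K] : List (V × K) → List (V × K) → Prop
  | erase (p t : List (V × K)) (v : V) : ReductionStep (p ++ (v, 1) :: t) (p ++ t)
  | merge (p mid t : List (V × K)) (v : V) (g h : K) :
      (∀ l ∈ mid, Γ.Adj l.1 v) →
        ReductionStep (p ++ (v, g) :: (mid ++ (v, h) :: t)) (p ++ (v, g * h) :: (mid ++ t))

theorem ReductionStep.cons [One K] [Mul K] {w w' : List (V × K)} (l : V × K)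
    (h : ReductionStep Γ w w') : ReductionStep Γ (l :: w) (l :: w') := by
  cases h with
  | erase p t v => exact .erase (l :: p) t v
  | merge p mid t v g h hmid => exact .merge (l :: p) mid t v g h hmid

theorem ReductionStep.length_lt [One K] [Mul K] {w w' : List (V × K)}
    (h : ReductionStep Γ w w') : w'.length < w.length := by
  cases h <;> simp

theorem ReductionStep.wordProd_eq [Group K] {w w' : List (V × K)} (h : ReductionStep Γ w w') :
    wordProd Γ w' = wordProd Γ w := by
  cases h with
  | erase p t v => simp
  | merge p mid t v g h hmid =>
    have hcomm : Commute (wordProd Γ mid) (of Γ _ v h) :=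
      Commute.list_prod_left _ _ fun x hx => by
        obtain ⟨l, hl, rfl⟩ := List.mem_map.mp hx
        exact of_commute (hmid l hl) _ _
    simp only [wordProd_append, wordProd_cons, map_mul, hcomm.left_comm, mul_assoc]

theorem exists_eq_append_of_pull_eq_some [DecidableEq V] [DecidableRel Γ.Adj] {v : V} {k : K}
    {w t : List (V × K)} (h : pull Γ v w = some (k, t)) :
    ∃ mid rest, w = mid ++ (v, k) :: rest ∧ ∀ l ∈ mid, Γ.Adj l.1 v := by
  induction w generalizing t with
  | nil => simp at h
  | cons l w ih =>
    obtain ⟨u, g⟩ := l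
    by_cases huv : u = v
    · subst huv
      obtain ⟨rfl, rfl⟩ : g = k ∧ w = t := by simpa using h
      exact ⟨[], w, rfl, by simp⟩
    by_cases hadj : Γ.Adj u v
    · obtain ⟨⟨k, t'⟩, ht', h⟩ :=
        Option.map_eq_some_iff.mp (pull_cons_of_adj hadj g w ▸ h)
      cases h
      obtain ⟨mid, rest, rfl, hmid⟩ := ih ht'
      exact ⟨(u, g) :: mid, rest, rfl, by simpa [hadj] using hmid⟩
    · simp [pull_cons_of_not_adj huv hadj] at h

theorem exists_reductionStep [Group K] [DecidableEq V] [DecidableRel Γ.Adj]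
    {w : List (V × K)} (hw : ¬IsReduced Γ w) : ∃ w', ReductionStep Γ w w' := by
  induction w with
  | nil => exact absurd .nil hw
  | cons l w ih =>
    obtain ⟨v, g⟩ := l
    by_cases hg : g = 1
    · subst hg
      exact ⟨w, .erase [] w v⟩
    rcases hv : pull Γ v w with _ | ⟨k, t⟩
    · have : ¬IsReduced Γ w := fun hw' => hw (.cons hg hv hw')
      obtain ⟨w', hw'⟩ := ih this
      exact ⟨_, hw'.cons _⟩
    · obtain ⟨mid, rest, rfl, hmid⟩ := exists_eq_append_of_pull_eq_some hv
      exact ⟨_, .merge [] mid rest v g k hmid⟩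

theorem exists_isReduced_wordProd_eq [Group K] [DecidableEq V] [DecidableRel Γ.Adj]
    {P : List (V × K) → Prop} (hP : ∀ w w', ReductionStep Γ w w' → P w → P w')
    {w : List (V × K)} (hw : P w) :
    ∃ w', IsReduced Γ w' ∧ wordProd Γ w' = wordProd Γ w ∧ P w' := by
  by_cases hred : IsReduced Γ w
  · exact ⟨w, hred, rfl, hw⟩
  obtain ⟨w', hstep⟩ := exists_reductionStep hred
  obtain ⟨w'', h₁, h₂, h₃⟩ := exists_isReduced_wordProd_eq hP (hP _ _ hstep hw)
  exact ⟨w'', h₁, h₂.trans hstep.wordProd_eq, h₃⟩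
termination_by w.length
decreasing_by exact hstep.length_lt

end Reduction

section Box

variable {Γ} [DecidableEq V]

def exponents (u : V) (w : List (V × Multiplicative ℤ)) : List ℤ :=
  w.filterMap fun l => if l.1 = u then some l.2.toAdd else none

@[simp]
theorem exponents_nil (u : V) : exponents u [] = [] := rfl

@[simp]
theorem exponents_append (u : V) (w₁ w₂ : List (V × Multiplicative ℤ)) :
    exponents u (w₁ ++ w₂) = exponents u w₁ ++ exponents u w₂ :=
  List.filterMap_append

@[simp]
theorem exponents_cons_self (u : V) (g : Multiplicative ℤ) (w : List (V × Multiplicative ℤ)) :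
    exponents u ((u, g) :: w) = g.toAdd :: exponents u w := by
  simp [exponents]

@[simp]
theorem exponents_cons_of_ne {u v : V} (h : v ≠ u) (g : Multiplicative ℤ)
    (w : List (V × Multiplicative ℤ)) : exponents u ((v, g) :: w) = exponents u w := by
  simp [exponents, h]

theorem exponents_eq_nil {u : V} {w : List (V × Multiplicative ℤ)} (h : ∀ l ∈ w, l.1 ≠ u) :
    exponents u w = [] :=
  List.filterMap_eq_nil_iff.mpr fun l hl => by simp [h l hl]

theorem sum_exponents (u : V) (w : List (V × Multiplicative ℤ)) :
    (exponents u w).sum = (proj Γ _ (wordProd Γ w) u).toAdd := by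
  induction w with
  | nil => rfl
  | cons l w ih =>
    obtain ⟨v, g⟩ := l
    have hproj : proj Γ (fun _ => Multiplicative ℤ) (of Γ _ v g) = Pi.mulSingle v g := rfl
    by_cases hvu : v = u
    · subst hvu
      simp [hproj, ih]
    · simp [hproj, ih, hvu]

theorem sum_exponents_eq_zero {w : List (V × Multiplicative ℤ)}
    (hw : wordProd Γ w ∈ commutator (GraphProduct Γ fun _ => Multiplicative ℤ)) (u : V) :
    (exponents u w).sum = 0 := by
  rw [sum_exponents, Abelianization.commutator_subset_ker _ hw]
  rfl

/-- The lattice path traced by `w` in `ℤ^V` stays in the cube `[-L, L]^V`. -/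
def StaysInBox (L : ℕ) (w : List (V × Multiplicative ℤ)) : Prop :=
  ∀ u, ∀ s ∈ (exponents u w).partialSums, s.natAbs ≤ L

theorem StaysInBox.mono {L L' : ℕ} (h : L ≤ L') {w : List (V × Multiplicative ℤ)}
    (hw : StaysInBox L w) : StaysInBox L' w :=
  fun u s hs => (hw u s hs).trans h

theorem StaysInBox.append {L : ℕ} {w₁ w₂ : List (V × Multiplicative ℤ)}
    (h₁ : StaysInBox L w₁) (h₂ : StaysInBox L w₂) (h : ∀ u, (exponents u w₁).sum = 0) :
    StaysInBox L (w₁ ++ w₂) := by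
  intro u s hs
  simp only [exponents_append, List.partialSums_append, h u, zero_add, List.map_id',
    List.mem_append] at hs
  exact hs.elim (h₁ u s) fun hs => h₂ u s (List.tail_subset _ hs)

theorem staysInBox_sum_natAbs (w : List (V × Multiplicative ℤ)) :
    StaysInBox (w.map fun l => l.2.toAdd.natAbs).sum w := by
  intro u
  induction w with
  | nil => simp
  | cons l w ih =>
    obtain ⟨v, g⟩ := l
    by_cases hvu : v = u
    · subst hvu
      simp only [exponents_cons_self, List.partialSums_cons, List.mem_cons, List.mem_map]
      rintro s (rfl | ⟨s, hs, rfl⟩)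
      · simp
      · simpa using (Int.natAbs_add_le _ _).trans (Nat.add_le_add_left (ih s hs) _)
    · simpa [hvu] using fun s hs => (ih s hs).trans (Nat.le_add_left _ _)

theorem ReductionStep.staysInBox {L : ℕ} {w w' : List (V × Multiplicative ℤ)}
    (h : ReductionStep Γ w w') (hw : StaysInBox L w) : StaysInBox L w' := by
  intro u s hs
  refine hw u s ?_
  cases h with
  | erase p t v =>
    by_cases hvu : v = u
    · subst hvu
      simpa using List.partialSums_append_subset_append_zero_cons _ _ (by simpa using hs)
    · simpa [hvu] using hs
  | merge p mid t v g h hmid =>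
    by_cases hvu : v = u
    · subst hvu
      have hmid' := exponents_eq_nil fun l hl => (hmid l hl).ne
      simpa [hmid'] using
        List.partialSums_append_add_cons_subset _ _ _ _ (by simpa [hmid'] using hs)
    · simpa [hvu] using hs

theorem StaysInBox.natAbs_le {L : ℕ} {w : List (V × Multiplicative ℤ)} (hw : StaysInBox L w)
    {l : V × Multiplicative ℤ} (hl : l ∈ w) : l.2.toAdd.natAbs ≤ 2 * L := by
  obtain ⟨p, t, rfl⟩ := List.append_of_mem hl
  obtain ⟨v, g⟩ := l
  have hps : (exponents v (p ++ (v, g) :: t)).partialSums =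
      ((exponents v p ++ [g.toAdd]) ++ exponents v t).partialSums := by
    simp
  have h₁ := hw v _ <| hps ▸ List.partialSums_subset_append _ _
    (List.partialSums_subset_append _ _ (List.sum_mem_partialSums (exponents v p)))
  have h₂ := hw v _ <| hps ▸ List.partialSums_subset_append _ _ (List.sum_mem_partialSums _)
  simp only [List.sum_append, List.sum_singleton] at h₂
  have := Int.natAbs_sub_le ((exponents v p).sum + g.toAdd) (exponents v p).sum
  simp only [add_sub_cancel_left] at this
  dsimp only
  omega

theorem exists_staysInBox_of_fg
    {H : Subgroup (GraphProduct Γ fun _ => Multiplicative ℤ)} (hle : H ≤ commutator _)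
    (hfg : H.FG) : ∃ L, ∀ x ∈ H, ∃ w, wordProd Γ w = x ∧ StaysInBox L w := by
  obtain ⟨S, rfl⟩ := hfg
  choose word hword using wordProd_surjective (Γ := Γ) (K := Multiplicative ℤ)
  let size (x : GraphProduct Γ fun _ => Multiplicative ℤ) : ℕ :=
    ((word x).map fun l => l.2.toAdd.natAbs).sum
  have hsize (x : GraphProduct Γ fun _ => Multiplicative ℤ) : StaysInBox (size x) (word x) :=
    staysInBox_sum_natAbs _
  let L := S.sup fun s => max (size s) (size s⁻¹)
  have hL {s} (hs : s ∈ S) : max (size s) (size s⁻¹) ≤ L :=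
    Finset.le_sup (f := fun s => max (size s) (size s⁻¹)) hs
  refine ⟨L, fun x hx => ?_⟩
  induction hx using Subgroup.closure_induction'' with
  | mem x hx => exact ⟨word x, hword x, (hsize x).mono (le_of_max_le_left (hL hx))⟩
  | inv_mem x hx =>
    exact ⟨word x⁻¹, hword x⁻¹, (hsize x⁻¹).mono (le_of_max_le_right (hL hx))⟩
  | one => exact ⟨[], rfl, by simp [StaysInBox]⟩
  | mul x y hx _ hbx hby =>
    obtain ⟨wx, rfl, hbx⟩ := hbx
    obtain ⟨wy, rfl, hby⟩ := hby
    exact ⟨wx ++ wy, wordProd_append _ _, hbx.append hby (sum_exponents_eq_zero (hle hx))⟩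

end Box

section ReductionMod

variable {Γ}

variable (Γ) in
def reduceMod (m : ℕ) : GraphProduct Γ (fun _ => Multiplicative ℤ) →*
    GraphProduct Γ (fun _ => Multiplicative (ZMod m)) :=
  map fun _ => (Int.castAddHom (ZMod m)).toMultiplicative

theorem wordProd_eq_one_of_reduceMod_eq_one [DecidableEq V] {L m : ℕ} (hLm : 2 * L < m)
    {w : List (V × Multiplicative ℤ)} (hw : StaysInBox L w)
    (h : reduceMod Γ m (wordProd Γ w) = 1) : wordProd Γ w = 1 := by
  classical
  obtain ⟨w', hred, hprod, hbox⟩ :=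
    exists_isReduced_wordProd_eq (Γ := Γ) (fun _ _ hs hw => hs.staysInBox hw) hw
  have hletters : ∀ l ∈ w', (Int.castAddHom (ZMod m)).toMultiplicative l.2 ≠ 1 := by
    intro l hl hl1
    have hdvd : (m : ℤ) ∣ l.2.toAdd := (ZMod.intCast_zmod_eq_zero_iff_dvd _ _).mp hl1
    have hm := Int.natAbs_le_of_dvd_ne_zero hdvd (hred.ne_one_of_mem hl)
    have := hbox.natAbs_le hl
    omega
  have := (hred.map _ hletters).eq_nil_of_wordProd_eq_one (by rwa [← map_wordProd, hprod])
  rw [← hprod, List.map_eq_nil_iff.mp this, wordProd_nil]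

end ReductionMod

end GraphProduct

theorem fg_subgroup_of_raag_commutator_embeds_general
    {V : Type*} (Γ : SimpleGraph V)
    (H : Subgroup (GraphProduct Γ (fun _ => Multiplicative ℤ)))
    (hle : H ≤ commutator (GraphProduct Γ (fun _ => Multiplicative ℤ)))
    (hfg : H.FG) :
    ∃ m : ℕ, 2 ≤ m ∧
      ∃ f : H →* commutator (GraphProduct Γ (fun _ => Multiplicative (ZMod m))),
        Function.Injective f := by
  classical
  obtain ⟨L, hL⟩ := GraphProduct.exists_staysInBox_of_fg hle hfg
  let φ := GraphProduct.reduceMod Γ (2 * L + 2)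
  refine ⟨2 * L + 2, by omega,
    (φ.comp H.subtype).codRestrict _ fun x => map_mem_commutator φ (hle x.2), ?_⟩
  refine (injective_iff_map_eq_one _).mpr fun x hx => Subtype.ext ?_
  obtain ⟨w, hw, hbox⟩ := hL x x.2
  have hφ : φ (GraphProduct.wordProd Γ w) = 1 := hw ▸ congrArg Subtype.val hx
  exact hw ▸ GraphProduct.wordProd_eq_one_of_reduceMod_eq_one (by omega) hbox hφ

/-- Every finitely generated subgroup of the commutator subgroup `[A(Γ), A(Γ)]` of the
right-angled Artin group on a finite graph `Γ` embeds into `[GP_m(Γ), GP_m(Γ)]` for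
some finite `m ≥ 2`, where `GP_m(Γ)` is the graph product over `Γ` of cyclic groups of
order `m`. -/
theorem fg_subgroup_of_raag_commutator_embeds
    {V : Type*} [Finite V] (Γ : SimpleGraph V)
    (H : Subgroup (GraphProduct Γ (fun _ => Multiplicative ℤ)))
    (hle : H ≤ commutator (GraphProduct Γ (fun _ => Multiplicative ℤ)))
    (hfg : H.FG) :
    ∃ m : ℕ, 2 ≤ m ∧
      ∃ f : H →* commutator (GraphProduct Γ (fun _ => Multiplicative (ZMod m))),
        Function.Injective f :=
  fg_subgroup_of_raag_commutator_embeds_general Γ H hle hfg
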